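/- Fact contradictions do not affect the rule-based contension measure: for any rule base B and any atom c not occurring in any rule of B with nonempty body, I^RB_c(B ∪ {c, ¬c}) = I^RB_c(B). -/

import Mathlib

open scoped Classical

/-- A rule over atoms `A`: literals are pairs (atom, sign). -/
structure Rule (A : Type*) where
  body : Finset (A × Bool)
  head : A × Bool
deriving DecidableEq

abbrev RuleBase (A : Type*) := Finset (Rule A)

variable {A : Type*}

/-- The complement of a literal. -/
def litCompl (l : A × Bool) : A × Bool := (l.1, !l.2)

/-- The fact with head `l` (empty body). -/
def factR (l : A × Bool) : Rule A := ⟨∅, l⟩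

/-- The facts (empty-body rules) of a rule base. -/
noncomputable def facts [DecidableEq A] (B : RuleBase A) : RuleBase A :=
  B.filter (fun r => r.body = ∅)

/-- The proper (non-fact) rules of a rule base. -/
noncomputable def properRules [DecidableEq A] (B : RuleBase A) : RuleBase A :=
  B.filter (fun r => r.body ≠ ∅)

/-- A set of literals is closed w.r.t. a rule base. -/
def Closed (B : RuleBase A) (M : Set (A × Bool)) : Prop :=
  ∀ r ∈ B, (↑r.body ⊆ M) → r.head ∈ M

/-- The minimal model: the smallest closed set of literals. -/
def minModel (B : RuleBase A) : Set (A × Bool) :=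
  {l | ∀ M : Set (A × Bool), Closed B M → l ∈ M}

/-- A set of literals is consistent if it contains no complementary pair. -/
def ConsistentLits (M : Set (A × Bool)) : Prop :=
  ¬ ∃ a : A, (a, true) ∈ M ∧ (a, false) ∈ M

/-- A rule base is consistent if its minimal model is consistent. -/
def Consistent (B : RuleBase A) : Prop := ConsistentLits (minModel B)

/-- The minimal inconsistent subsets of a rule base. -/
def MI (B : RuleBase A) : Set (RuleBase A) :=
  { M | M ⊆ B ∧ ¬ Consistent M ∧ ∀ M' ⊂ M, Consistent M' }

/-- `M` contains a complementary pair of facts. -/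
def hasComplFactPair (M : RuleBase A) : Prop :=
  ∃ a : A, factR (a, true) ∈ M ∧ factR (a, false) ∈ M

/-- Minimal inconsistent subsets containing no complementary pair of facts. -/
def MIF (B : RuleBase A) : Set (RuleBase A) :=
  { M ∈ MI B | ¬ hasComplFactPair M }

/-- A formula is free in a rule base if it belongs to no minimal inconsistent subset. -/
def Free (r : Rule A) (B : RuleBase A) : Prop := ∀ M ∈ MI B, r ∉ M

/-- Rule consistency: the rules together with any consistent set of facts are consistent. -/
def RuleConsistent [DecidableEq A] (B : RuleBase A) : Prop :=
  ∀ F' ⊆ facts B, Consistent F' → Consistent (properRules B ∪ F')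

/-- The drastic inconsistency measure. -/
noncomputable def Idr (B : RuleBase A) : ℕ := if Consistent B then 0 else 1

/-- The rule-based drastic inconsistency measure. -/
noncomputable def IRBd (B : RuleBase A) : ℕ := if MIF B = ∅ then 0 else 1

/-- The rule-based MI-inconsistency measure. -/
noncomputable def IRBMI (B : RuleBase A) : ℕ := (MIF B).ncard

/-- The rule-based problematic inconsistency measure: number of distinct
    non-fact rules occurring in some element of `MIF B`. -/
noncomputable def IRBp (B : RuleBase A) : ℕ :=
  {r : Rule A | r.body ≠ ∅ ∧ ∃ M ∈ MIF B, r ∈ M}.ncard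

/-- Three truth values. -/
inductive TV | t | b | f
deriving DecidableEq

def TV.negv : TV → TV
  | .t => .f
  | .f => .t
  | .b => .b

/-- Value of a literal under a three-valued interpretation. -/
def litVal (v : A → TV) (l : A × Bool) : TV :=
  if l.2 then v l.1 else (v l.1).negv

/-- Designated truth values. -/
def TV.des : TV → Prop
  | .f => False
  | _ => True

/-- Three-valued satisfaction of a rule. -/
def sat3 (v : A → TV) (r : Rule A) : Prop :=
  (∀ l ∈ r.body, (litVal v l).des) → (litVal v r.head).des

/-- The rule-based contension inconsistency measure. -/
noncomputable def IRBc (B : RuleBase A) : ℕ :=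
  sInf { n : ℕ | ∃ v : A → TV,
    (∀ M ∈ MIF B, ∀ r ∈ M, sat3 v r) ∧ n = {a : A | v a = TV.b}.ncard }

/-- The payoff of `α` in coalition `C` (w.r.t. rule base `B` and measure `I`). -/
noncomputable def CoalPayoff [DecidableEq A] (I : RuleBase A → ℝ) (B : RuleBase A)
    (α : Rule A) (C : RuleBase A) : ℝ :=
  ((Nat.factorial (C.card - 1) * Nat.factorial (B.card - C.card) : ℕ) : ℝ)
    / ((Nat.factorial B.card : ℕ) : ℝ) * (I C - I (C.erase α))

/-- The additional payoff shifted from facts to non-free rules. -/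
noncomputable def AddPayoff [DecidableEq A] (I : RuleBase A → ℝ) (B : RuleBase A)
    (r : Rule A) (C : RuleBase A) : ℝ :=
  if Free r C then 0
  else (∑ f ∈ C.filter (fun x => x.body = ∅), CoalPayoff I B f C)
        / ((C.filter (fun x => x.body ≠ ∅ ∧ ¬ Free x C)).card : ℝ)

/-- The adjusted Shapley inconsistency value. -/
noncomputable def Sstar [DecidableEq A] (I : RuleBase A → ℝ) (B : RuleBase A)
    (α : Rule A) : ℝ :=
  if α.body = ∅ then 0
  else ∑ C ∈ B.powerset, (CoalPayoff I B α C + AddPayoff I B α C)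

/-!
Since `c` occurs only in facts, deleting the fact `(c, b)` from a rule base removes at most the
literal `(c, b)` from its minimal model. Hence a minimal inconsistent subset containing that fact
must derive both `c` and `¬c`; as only facts have head on `c`, it then contains the complementary
fact pair, so it is not in `MIF`. Adding the facts `c` and `¬c` therefore leaves `MIF`, and with
it `IRBc`, unchanged.
-/

def OnlyInFacts (c : A) (B : RuleBase A) : Prop :=
  ∀ r ∈ B, r.body ≠ ∅ → (r.head.1 ≠ c ∧ ∀ l ∈ r.body, l.1 ≠ c)

theorem OnlyInFacts.mono {c : A} {N B : RuleBase A} (hc : OnlyInFacts c B) (hN : N ⊆ B) :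
    OnlyInFacts c N :=
  fun r hr => hc r (hN hr)

theorem OnlyInFacts.insert_factR [DecidableEq A] {c : A} {B : RuleBase A} (l : A × Bool)
    (hc : OnlyInFacts c B) : OnlyInFacts c (insert (factR l) B) := by
  intro r hr hbody
  rcases Finset.mem_insert.1 hr with rfl | hr
  · exact absurd rfl hbody
  · exact hc r hr hbody

theorem minModel_subset_of_closed {N : RuleBase A} {S : Set (A × Bool)} (hS : Closed N S) :
    minModel N ⊆ S :=
  fun _ hl => hl S hS

theorem closed_minModel (N : RuleBase A) : Closed N (minModel N) :=
  fun r hr hbody _ hM => hM r hr (fun _ hl => hbody hl _ hM)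

theorem minModel_subset_heads (N : RuleBase A) : minModel N ⊆ {l | ∃ r ∈ N, r.head = l} :=
  minModel_subset_of_closed fun r hr _ => ⟨r, hr, rfl⟩

theorem OnlyInFacts.factR_mem_of_mem_minModel {c : A} {N : RuleBase A} (hc : OnlyInFacts c N)
    {b : Bool} (h : (c, b) ∈ minModel N) : factR (c, b) ∈ N := by
  obtain ⟨r, hr, hhead⟩ := minModel_subset_heads N h
  by_cases hbody : r.body = ∅
  · obtain ⟨body, head⟩ := r
    simp_all [factR]
  · exact absurd (congrArg Prod.fst hhead) (hc r hr hbody).1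

theorem OnlyInFacts.minModel_subset_insert_minModel_erase [DecidableEq A] {c : A}
    {N : RuleBase A} (hc : OnlyInFacts c N) (b : Bool) :
    minModel N ⊆ insert (c, b) (minModel (N.erase (factR (c, b)))) := by
  refine minModel_subset_of_closed fun r hr hbody => ?_
  by_cases hrf : r = factR (c, b)
  · exact Or.inl (by rw [hrf]; rfl)
  refine Or.inr (closed_minModel _ r (Finset.mem_erase.2 ⟨hrf, hr⟩) fun l hl => ?_)
  have hlc : l.1 ≠ c := (hc r hr (Finset.ne_empty_of_mem hl)).2 l hl
  exact (hbody hl).resolve_left fun hl' => hlc (by rw [hl'])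

theorem OnlyInFacts.factR_notMem_of_mem_MIF [DecidableEq A] {c : A} {B M : RuleBase A}
    (hc : OnlyInFacts c B) (hM : M ∈ MIF B) (b : Bool) : factR (c, b) ∉ M := by
  obtain ⟨⟨hMB, hinc, hmin⟩, hnopair⟩ := hM
  intro hf
  have hcM : OnlyInFacts c M := hc.mono hMB
  have hcons : Consistent (M.erase (factR (c, b))) := hmin _ (Finset.erase_ssubset hf)
  obtain ⟨a, htrue, hfalse⟩ := not_not.1 hinc
  by_cases hac : a = c
  · subst hac
    exact hnopair ⟨a, hcM.factR_mem_of_mem_minModel htrue,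
      hcM.factR_mem_of_mem_minModel hfalse⟩
  · have hne : ∀ b', (a, b') ≠ (c, b) := fun _ h => hac (congrArg Prod.fst h)
    exact hcons ⟨a, (hcM.minModel_subset_insert_minModel_erase b htrue).resolve_left (hne _),
      (hcM.minModel_subset_insert_minModel_erase b hfalse).resolve_left (hne _)⟩

theorem MIF_mono {B B' : RuleBase A} (h : B ⊆ B') : MIF B ⊆ MIF B' :=
  fun _ ⟨⟨hMB, hinc, hmin⟩, hnopair⟩ => ⟨⟨hMB.trans h, hinc, hmin⟩, hnopair⟩

theorem MIF_insert_of_forall_notMem [DecidableEq A] {r : Rule A} {B : RuleBase A}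
    (h : ∀ M ∈ MIF (insert r B), r ∉ M) : MIF (insert r B) = MIF B := by
  refine (MIF_mono (Finset.subset_insert r B)).antisymm' fun M hM => ?_
  exact ⟨⟨(Finset.subset_insert_iff_of_notMem (h M hM)).1 hM.1.1, hM.1.2⟩, hM.2⟩

theorem OnlyInFacts.MIF_insert_factR [DecidableEq A] {c : A} {B : RuleBase A}
    (hc : OnlyInFacts c B) (b : Bool) : MIF (insert (factR (c, b)) B) = MIF B :=
  MIF_insert_of_forall_notMem fun _ hM => (hc.insert_factR _).factR_notMem_of_mem_MIF hM b

theorem stmt19_general [DecidableEq A] (B : RuleBase A) (c : A)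
    (h : ∀ r ∈ B, r.body ≠ ∅ → (r.head.1 ≠ c ∧ ∀ l ∈ r.body, l.1 ≠ c)) :
    IRBc (insert (factR (c, true)) (insert (factR (c, false)) B)) = IRBc B := by
  have hc : OnlyInFacts c B := h
  unfold IRBc
  rw [(hc.insert_factR _).MIF_insert_factR, hc.MIF_insert_factR]

theorem stmt19 [DecidableEq A] [Fintype A] (B : RuleBase A) (c : A)
    (h : ∀ r ∈ B, r.body ≠ ∅ → (r.head.1 ≠ c ∧ ∀ l ∈ r.body, l.1 ≠ c)) :
    IRBc (insert (factR (c, true)) (insert (factR (c, false)) B)) = IRBc B :=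
  stmt19_general B c h
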